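/- arXiv:2510.08192 — 2 statements merged into one kernel-verified Lean document; each statement's English description precedes it below -/
import Mathlib

section
/- Every signed graph (G,σ) that has a spanning even Eulerian subgraph admits a nowhere-zero ℤ₄-flow. -/
/-- A finite multigraph: a finite vertex type, a finite edge type, and each edge has two
(ordered, as a mere presentation) endpoints.  Each edge `e` consists of two half-edges:
the half-edge at `fst e` (encoded by `false`) and the half-edge at `snd e` (encoded by `true`). -/
structure Multigraph where
  V : Type
  E : Type
  fintypeV : Fintype V
  decEqV : DecidableEq V
  fintypeE : Fintype E
  decEqE : DecidableEq E
  fst : E → V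
  snd : E → V

attribute [instance] Multigraph.fintypeV Multigraph.decEqV Multigraph.fintypeE Multigraph.decEqE

namespace Multigraph

variable (G : Multigraph)

/-- A loopless multigraph. -/
def IsLoopless : Prop := ∀ e, G.fst e ≠ G.snd e

/-- A signature assigns `+1` or `-1` to each edge. -/
def IsSignature (σ : G.E → ℤ) : Prop := ∀ e, σ e = 1 ∨ σ e = -1

/-- An orientation of a signed graph: each half-edge gets a direction `±1`
(`+1` = oriented away from its endpoint), and the two half-edges of an edge `e`
satisfy `τ(h¹)·τ(h²) = -σ(e)`. -/
def IsOrientation (σ : G.E → ℤ) (τ : G.E → Bool → ℤ) : Prop :=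
  ∀ e, (τ e false = 1 ∨ τ e false = -1) ∧ (τ e true = 1 ∨ τ e true = -1) ∧
    τ e false * τ e true = -σ e

/-- The boundary of `f` at the vertex `v` (with respect to the orientation `τ`):
the sum of `τ(h)·f(e_h)` over all half-edges `h` incident with `v`. -/
def boundary (τ : G.E → Bool → ℤ) (f : G.E → ℤ) (v : G.V) : ℤ :=
  ∑ e : G.E, ((if G.fst e = v then τ e false * f e else 0) +
    (if G.snd e = v then τ e true * f e else 0))

/-- `(τ, f)` is a nowhere-zero `k`-flow: `τ` is an orientation, all boundaries vanish,
and `1 ≤ |f e| ≤ k - 1` for every edge. -/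
def IsNZFlow (σ : G.E → ℤ) (k : ℕ) (τ : G.E → Bool → ℤ) (f : G.E → ℤ) : Prop :=
  G.IsOrientation σ τ ∧ (∀ v, G.boundary τ f v = 0) ∧
    ∀ e, 1 ≤ |f e| ∧ |f e| ≤ (k : ℤ) - 1

/-- The signed graph admits a nowhere-zero `k`-flow. -/
def HasNZFlow (σ : G.E → ℤ) (k : ℕ) : Prop := ∃ τ f, G.IsNZFlow σ k τ f

/-- A signed graph is flow-admissible if it admits a nowhere-zero `k`-flow for some `k ≥ 2`. -/
def FlowAdmissible (σ : G.E → ℤ) : Prop := ∃ k, 2 ≤ k ∧ G.HasNZFlow σ k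

/-- Degree of `v` in the spanning subgraph with edge set `F`. -/
def degIn (F : Finset G.E) (v : G.V) : ℕ :=
  (F.filter (fun e => G.fst e = v)).card + (F.filter (fun e => G.snd e = v)).card

/-- Degree of `v` in `G`. -/
def deg (v : G.V) : ℕ := G.degIn Finset.univ v

/-- `u` and `v` are joined by an edge of `F`. -/
def LinkedIn (F : Finset G.E) (u v : G.V) : Prop :=
  ∃ e ∈ F, (G.fst e = u ∧ G.snd e = v) ∨ (G.fst e = v ∧ G.snd e = u)

/-- The spanning subgraph with edge set `F` is connected. -/
def SpanningConnected (F : Finset G.E) : Prop :=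
  ∀ u v : G.V, Relation.ReflTransGen (G.LinkedIn F) u v

/-- The spanning subgraph with edge set `F` is Eulerian: connected with all degrees even. -/
def SpanningEulerian (F : Finset G.E) : Prop :=
  Nonempty G.V ∧ G.SpanningConnected F ∧ ∀ v, Even (G.degIn F v)

/-- The edge set `F` is a Hamiltonian circuit of `G`: a spanning connected 2-regular subgraph. -/
def IsHamCircuit (F : Finset G.E) : Prop :=
  Nonempty G.V ∧ G.SpanningConnected F ∧ ∀ v, G.degIn F v = 2

/-- The set of negative edges of `(G, σ)`. -/
def negEdges (σ : G.E → ℤ) : Finset G.E := Finset.univ.filter (fun e => σ e = -1)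

/-- `G` is cubic (3-regular). -/
def IsCubic : Prop := ∀ v, G.deg v = 3

/-- `G` is properly 3-edge-colorable. -/
def ThreeEdgeColorable : Prop :=
  ∃ c : G.E → Fin 3, ∀ e e', e ≠ e' →
    (G.fst e = G.fst e' ∨ G.fst e = G.snd e' ∨ G.snd e = G.fst e' ∨ G.snd e = G.snd e') →
    c e ≠ c e'

/-- The underlying graph admits a nowhere-zero 4-flow (i.e. the all-positive signed graph does). -/
def FourNZFAdmissible : Prop := G.HasNZFlow (fun _ => 1) 4

/-- The flow number: the least `k ≥ 2` such that `(G,σ)` admits a nowhere-zero `k`-flow. -/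
noncomputable def flowNumber (σ : G.E → ℤ) : ℕ := sInf {k | 2 ≤ k ∧ G.HasNZFlow σ k}

end Multigraph

namespace Multigraph

/-- `(G, σ)` admits a nowhere-zero `ℤ₄`-flow: there is an orientation `τ` and
`f : E(G) → ℤ₄` with `f e ≠ 0` everywhere and vanishing boundary at every vertex. -/
def HasNZFlowZMod4 (G : Multigraph) (σ : G.E → ℤ) : Prop :=
  ∃ (τ : G.E → Bool → ℤ) (f : G.E → ZMod 4),
    G.IsOrientation σ τ ∧ (∀ e, f e ≠ 0) ∧
    ∀ v : G.V,
      (∑ e : G.E, ((if G.fst e = v then ((τ e false : ZMod 4)) * f e else 0) +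
        (if G.snd e = v then ((τ e true : ZMod 4)) * f e else 0))) = 0

end Multigraph

/-! Orient every edge `e` by `+1` at `fst e` and `-σ e` at `snd e`, and let `F` be the spanning
even Eulerian subgraph. The boundary of the indicator `1_F` is `2 M` for an integer vertex
function `M`, because the degrees in `F` are even, and `∑ M` is the number of negative edges of
`F`, which is even. As `F` is connected, `M mod 2` is then the mod-2 boundary of some
`w : E → ZMod 2` that is `1` off `F`. Now `f = 1_F + 2 w` is a nowhere-zero `ZMod 4`-flow: it is
odd on `F` and `2` off `F`, and since `2 = -2` in `ZMod 4` the boundary of `2 w` is `2 M` whatever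
the orientation, so `∂f = 4 M = 0`. -/

open Finset

def twoMulZModTwo : ZMod 2 →+ ZMod 4 := ZMod.lift 2 ⟨zmultiplesHom (ZMod 4) 2, by decide⟩

theorem twoMulZModTwo_intCast (k : ℤ) : twoMulZModTwo k = 2 * k := by
  rw [twoMulZModTwo, ZMod.lift_coe, zmultiplesHom_apply, zsmul_eq_mul, mul_comm]

theorem one_add_twoMulZModTwo_ne_zero (a : ZMod 2) : 1 + twoMulZModTwo a ≠ 0 := by
  fin_cases a <;> decide

namespace Multigraph

variable (G : Multigraph)

/-- For `A = ℤ` this is `boundary`; `HasNZFlowZMod4` asks for it to vanish with `A = ZMod 4`. -/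
def flowBoundary {A : Type*} [AddCommGroup A] (τ : G.E → Bool → ℤ) : (G.E → A) →+ (G.V → A) where
  toFun f v := ∑ e, ((if G.fst e = v then τ e false • f e else 0) +
    (if G.snd e = v then τ e true • f e else 0))
  map_zero' := by ext; simp
  map_add' f g := by
    ext v
    simp only [Pi.add_apply, smul_add, ← sum_add_distrib]
    refine sum_congr rfl fun e _ => ?_
    split_ifs <;> abel

variable {G}

section Boundary

variable {A B : Type*} [AddCommGroup A] [AddCommGroup B]

theorem flowBoundary_apply (τ : G.E → Bool → ℤ) (f : G.E → A) (v : G.V) :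
    G.flowBoundary τ f v = ∑ e, ((if G.fst e = v then τ e false • f e else 0) +
      (if G.snd e = v then τ e true • f e else 0)) :=
  rfl

theorem flowBoundary_comp (τ : G.E → Bool → ℤ) (φ : A →+ B) (f : G.E → A) :
    G.flowBoundary τ (φ ∘ f) = φ ∘ G.flowBoundary τ f := by
  ext v
  simp [flowBoundary_apply, map_sum, apply_ite φ, map_zsmul]

theorem sum_flowBoundary (τ : G.E → Bool → ℤ) (f : G.E → A) :
    ∑ v, G.flowBoundary τ f v = ∑ e, (τ e false + τ e true) • f e := by
  simp only [flowBoundary_apply]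
  rw [sum_comm]
  simp [sum_add_distrib, add_smul]

theorem flowBoundary_one_single (e : G.E) (a : A) :
    G.flowBoundary 1 (Pi.single e a) = Pi.single (G.fst e) a + Pi.single (G.snd e) a := by
  ext v
  rw [flowBoundary_apply, sum_eq_single e]
  · simp [Pi.single_apply, eq_comm]
  · intro e' _ he'
    simp [he']
  · simp

theorem flowBoundary_one_indicator {R : Type*} [AddCommGroupWithOne R] (F : Finset G.E)
    (v : G.V) :
    G.flowBoundary 1 (fun e => if e ∈ F then (1 : R) else 0) v = G.degIn F v := by
  simp only [flowBoundary_apply, degIn, Pi.one_apply, one_smul, smul_ite, smul_zero, ← ite_and,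
    sum_add_distrib, sum_boole, Nat.cast_add]
  congr 3 <;> ext <;> simp [and_comm]

end Boundary

section ZModTwo

variable {F : Finset G.E}

theorem flowBoundary_eq_flowBoundary_one_of_isOrientation {σ : G.E → ℤ} {τ : G.E → Bool → ℤ}
    (hτ : G.IsOrientation σ τ) (x : G.E → ZMod 2) :
    G.flowBoundary τ x = G.flowBoundary 1 x := by
  have hsmul : ∀ e b, τ e b • x e = x e := fun e b => by
    obtain ⟨h₁, h₂, -⟩ := hτ e
    cases b
    · rcases h₁ with h | h <;> simp [h, ZMod.neg_eq_self_mod_two]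
    · rcases h₂ with h | h <;> simp [h, ZMod.neg_eq_self_mod_two]
  ext v
  simp only [flowBoundary_apply, hsmul, Pi.one_apply, one_smul]

theorem sum_flowBoundary_one_zmod_two (x : G.E → ZMod 2) : ∑ v, G.flowBoundary 1 x v = 0 := by
  simp [sum_flowBoundary, one_add_one_eq_two, CharTwo.two_eq_zero]

theorem exists_flowBoundary_eq_single_add_single {u v : G.V}
    (h : Relation.ReflTransGen (G.LinkedIn F) u v) :
    ∃ x : G.E → ZMod 2, (∀ e ∉ F, x e = 0) ∧
      G.flowBoundary 1 x = Pi.single u 1 + Pi.single v 1 := by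
  have two : ∀ y : G.V → ZMod 2, y + y = 0 := fun y => by
    ext w
    exact CharTwo.add_self_eq_zero (y w)
  induction h with
  | refl => exact ⟨0, fun _ _ => rfl, by rw [map_zero, two]⟩
  | @tail b c _ hbc ih =>
    obtain ⟨x, hxF, hx⟩ := ih
    obtain ⟨e, heF, hends⟩ := hbc
    refine ⟨x + Pi.single e 1, fun e' he' => ?_, ?_⟩
    · have hne : e' ≠ e := ne_of_mem_of_not_mem heF he' |>.symm
      simp [hxF e' he', hne]
    · have hends' : Pi.single (G.fst e) 1 + Pi.single (G.snd e) 1 =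
          (Pi.single b 1 + Pi.single c 1 : G.V → ZMod 2) := by
        rcases hends with ⟨h₁, h₂⟩ | ⟨h₁, h₂⟩ <;> rw [h₁, h₂]
        exact add_comm _ _
      calc G.flowBoundary 1 (x + Pi.single e 1)
          = Pi.single u 1 + Pi.single c 1 + (Pi.single b 1 + Pi.single b 1) := by
            rw [map_add, hx, flowBoundary_one_single, hends']
            abel
        _ = Pi.single u 1 + Pi.single c 1 := by rw [two, add_zero]

theorem exists_flowBoundary_eq_of_sum_eq_zero (hF : G.SpanningConnected F) {b : G.V → ZMod 2}
    (hb : ∑ v, b v = 0) :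
    ∃ x : G.E → ZMod 2, (∀ e ∉ F, x e = 0) ∧ G.flowBoundary 1 x = b := by
  cases isEmpty_or_nonempty G.V with
  | inl _ => exact ⟨0, fun _ _ => rfl, Subsingleton.elim _ _⟩
  | inr hV =>
    obtain ⟨v₀⟩ := hV
    choose X hXF hX using fun v => exists_flowBoundary_eq_single_add_single (hF v₀ v)
    refine ⟨∑ v, b v • X v, fun e he => by simp [hXF _ e he], ?_⟩
    simp only [map_sum, ZMod.map_smul, hX, smul_add, sum_add_distrib]
    rw [← sum_smul, hb, zero_smul, zero_add]
    simp only [← Pi.single_smul', smul_eq_mul, mul_one]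
    exact univ_sum_single b

theorem exists_eq_one_off_flowBoundary_eq (hF : G.SpanningConnected F)
    {b : G.V → ZMod 2} (hb : ∑ v, b v = 0) :
    ∃ w : G.E → ZMod 2, (∀ e ∉ F, w e = 1) ∧ G.flowBoundary 1 w = b := by
  set c : G.E → ZMod 2 := fun e => if e ∈ F then 0 else 1
  obtain ⟨x, hxF, hx⟩ := exists_flowBoundary_eq_of_sum_eq_zero hF (b := b - G.flowBoundary 1 c)
    (by simp [sum_sub_distrib, hb, sum_flowBoundary_one_zmod_two])
  refine ⟨x + c, fun e he => by simp [c, hxF e he, he], ?_⟩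
  rw [map_add, hx, sub_add_cancel]

end ZModTwo

section Flow

variable {σ : G.E → ℤ}

variable (G) in
def stdOrientation (σ : G.E → ℤ) : G.E → Bool → ℤ := fun e b => if b then -σ e else 1

theorem isOrientation_stdOrientation (hσ : G.IsSignature σ) :
    G.IsOrientation σ (G.stdOrientation σ) := by
  intro e
  rcases hσ e with h | h <;> simp [stdOrientation, h]

theorem sum_flowBoundary_stdOrientation_indicator (hσ : G.IsSignature σ) (F : Finset G.E) :
    ∑ v, G.flowBoundary (G.stdOrientation σ) (fun e => if e ∈ F then (1 : ℤ) else 0) v =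
      2 * #(F ∩ G.negEdges σ) := by
  have hterm : ∀ e, (G.stdOrientation σ e false + G.stdOrientation σ e true) •
      (if e ∈ F then (1 : ℤ) else 0) = 2 * if e ∈ F ∩ G.negEdges σ then 1 else 0 := by
    intro e
    rcases hσ e with h | h <;> by_cases he : e ∈ F <;> simp [stdOrientation, negEdges, h, he]
  rw [sum_flowBoundary, sum_congr rfl fun e _ => hterm e, ← mul_sum, sum_boole,
    filter_mem_eq_inter, univ_inter]

theorem even_flowBoundary_indicator {τ : G.E → Bool → ℤ} (hτ : G.IsOrientation σ τ)
    (F : Finset G.E) {v : G.V} (hv : Even (G.degIn F v)) :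
    Even (G.flowBoundary τ (fun e => if e ∈ F then (1 : ℤ) else 0) v) := by
  have hind : (Int.castAddHom (ZMod 2) ∘ fun e => if e ∈ F then (1 : ℤ) else 0) =
      fun e => if e ∈ F then 1 else 0 := by
    ext e
    by_cases he : e ∈ F <;> simp [he]
  rw [← ZMod.intCast_eq_zero_iff_even]
  calc ((G.flowBoundary τ (fun e => if e ∈ F then (1 : ℤ) else 0) v : ℤ) : ZMod 2)
      = G.flowBoundary τ (Int.castAddHom (ZMod 2) ∘ fun e => if e ∈ F then (1 : ℤ) else 0) v := by
        rw [flowBoundary_comp]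
        rfl
    _ = G.degIn F v := by
        rw [flowBoundary_eq_flowBoundary_one_of_isOrientation hτ, hind, flowBoundary_one_indicator]
    _ = 0 := ZMod.natCast_eq_zero_iff_even.mpr hv

end Flow

theorem hasNZFlowZMod4_of_flowBoundary_eq_two_mul {σ : G.E → ℤ} {τ : G.E → Bool → ℤ}
    (hτ : G.IsOrientation σ τ) {F : Finset G.E} {M : G.V → ℤ}
    (hM : ∀ v, G.flowBoundary τ (fun e => if e ∈ F then (1 : ℤ) else 0) v = 2 * M v)
    {w : G.E → ZMod 2} (hw_off : ∀ e ∉ F, w e = 1)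
    (hw : G.flowBoundary 1 w = fun v => (M v : ZMod 2)) :
    G.HasNZFlowZMod4 σ := by
  let f : G.E → ZMod 4 :=
    Int.castAddHom (ZMod 4) ∘ (fun e => if e ∈ F then 1 else 0) + twoMulZModTwo ∘ w
  have hf : G.flowBoundary τ f = 0 := by
    ext v
    rw [map_add, flowBoundary_comp, flowBoundary_comp,
      flowBoundary_eq_flowBoundary_one_of_isOrientation hτ, hw]
    simp only [Pi.add_apply, Function.comp_apply, hM, Int.coe_castAddHom, twoMulZModTwo_intCast,
      Int.cast_mul, Int.cast_ofNat, Pi.zero_apply]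
    have h4 : (4 : ZMod 4) = 0 := rfl
    linear_combination (M v : ZMod 4) * h4
  refine ⟨τ, f, hτ, fun e => ?_, fun v => ?_⟩
  · by_cases he : e ∈ F
    · simpa [f, he] using one_add_twoMulZModTwo_ne_zero (w e)
    · simpa [f, he, hw_off e he] using (by decide : twoMulZModTwo 1 ≠ 0)
  · simpa [flowBoundary_apply, zsmul_eq_mul] using congrFun hf v

end Multigraph

open Multigraph

theorem spanning_even_eulerian_has_nz_zmod4_flow_general
    (G : Multigraph) (σ : G.E → ℤ) (hσ : G.IsSignature σ)
    (hsee : ∃ F : Finset G.E, G.SpanningEulerian F ∧ Even ((F ∩ G.negEdges σ).card)) :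
    G.HasNZFlowZMod4 σ := by
  obtain ⟨F, ⟨-, hconn, hdeg⟩, hneg⟩ := hsee
  have hτ := isOrientation_stdOrientation hσ
  choose M hM using fun v => (even_flowBoundary_indicator hτ F (hdeg v)).two_dvd
  have hMsum : ∑ v, (M v : ZMod 2) = 0 := by
    have htotal := sum_flowBoundary_stdOrientation_indicator hσ F
    simp only [hM, ← mul_sum] at htotal
    rw [← Int.cast_sum, mul_left_cancel₀ two_ne_zero htotal, Int.cast_natCast]
    exact ZMod.natCast_eq_zero_iff_even.mpr hneg
  obtain ⟨w, hw_off, hw⟩ := exists_eq_one_off_flowBoundary_eq hconn hMsum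
  exact hasNZFlowZMod4_of_flowBoundary_eq_two_mul hτ hM hw_off hw

/-- Every signed graph with a spanning even Eulerian subgraph admits a
nowhere-zero `ℤ₄`-flow. -/
theorem spanning_even_eulerian_has_nz_zmod4_flow
    (G : Multigraph) (hG : G.IsLoopless) (σ : G.E → ℤ) (hσ : G.IsSignature σ)
    (hsee : ∃ F : Finset G.E, G.SpanningEulerian F ∧ Even ((F ∩ G.negEdges σ).card)) :
    G.HasNZFlowZMod4 σ :=
  spanning_even_eulerian_has_nz_zmod4_flow_general G σ hσ hsee
end

section
/- Let (G,σ) be a signed graph with a Hamiltonian circuit H all of whose edges are positive. If the number of negative edges of (G,σ) is even, then (G,σ) admits a 3-flow f such that every edge of E(G) ∖ E(H) has flow value ±1, i.e., E(G) ∖ E(H) ⊆ {e ∈ E(G) : f(e) = ±1}. -/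
open Multigraph


namespace Multigraph
variable (A : Multigraph)

/-- A step: an edge together with a traversal direction (`false` = from `fst` to `snd`). -/
abbrev Step := A.E × Bool

def ssrc (s : Step A) : A.V := if s.2 then A.snd s.1 else A.fst s.1
def sdst (s : Step A) : A.V := if s.2 then A.fst s.1 else A.snd s.1
def edgesOf (l : List (Step A)) : Finset A.E := (l.map Prod.fst).toFinset
def Good (l : List (Step A)) : Prop :=
  l.Chain' (fun a b => A.sdst a = A.ssrc b) ∧ (l.map Prod.fst).Nodup
def Closed (l : List (Step A)) : Prop :=
  ∀ a ∈ l.head?, ∀ b ∈ l.getLast?, A.sdst b = A.ssrc a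
def usedAt (l : List (Step A)) (v : A.V) : ℕ :=
  l.countP (fun s => decide (A.ssrc s = v)) + l.countP (fun s => decide (A.sdst s = v))
def visited (l : List (Step A)) : Finset A.V := (l.map (A.ssrc)).toFinset
def tog (J K : Finset A.E) : Finset A.E := (J ∪ K) \ (J ∩ K)

lemma degIn_split {U s : Finset A.E} (hs : s ⊆ U) (v : A.V) :
    A.degIn s v + A.degIn (U \ s) v = A.degIn U v := by
  unfold degIn
  have h1 : ∀ p : A.E → Prop, ∀ _ : DecidablePred p,
      (s.filter p).card + ((U \ s).filter p).card = (U.filter p).card := by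
    intro p hp
    rw [← Finset.card_union_of_disjoint]
    · rw [← Finset.filter_union, Finset.union_sdiff_of_subset hs]
    · exact Finset.disjoint_filter_filter (Finset.sdiff_disjoint.symm)
  have := h1 (fun e => A.fst e = v) (by infer_instance)
  have := h1 (fun e => A.snd e = v) (by infer_instance)
  omega

lemma exists_edge_of_degIn_pos {s : Finset A.E} {v : A.V} (h : A.degIn s v ≠ 0) :
    ∃ e ∈ s, A.fst e = v ∨ A.snd e = v := by
  unfold degIn at h
  have _hh := Nat.pos_of_ne_zero h
  by_contra hc
  push_neg at hc
  apply h
  have e1 : s.filter (fun e => A.fst e = v) = ∅ := by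
    apply Finset.filter_eq_empty_iff.mpr
    intro e he
    exact fun hf => (hc e he).1 hf
  have e2 : s.filter (fun e => A.snd e = v) = ∅ := by
    apply Finset.filter_eq_empty_iff.mpr
    intro e he
    exact fun hf => (hc e he).2 hf
  simp [e1, e2]
lemma usedAt_cons (s : Step A) (l : List (Step A)) (v : A.V) :
    A.usedAt (s :: l) v =
      ((if A.ssrc s = v then 1 else 0) + (if A.sdst s = v then 1 else 0)) + A.usedAt l v := by
  unfold usedAt
  rw [List.countP_cons, List.countP_cons]
  by_cases h1 : A.ssrc s = v <;> by_cases h2 : A.sdst s = v <;> simp [h1, h2] <;> ring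

lemma usedAt_parity (v : A.V) :
    ∀ (l : List (Step A)) (a : Step A),
      (a :: l).Chain' (fun x y => A.sdst x = A.ssrc y) →
      (A.usedAt (a :: l) v : ZMod 2) =
        (if A.ssrc a = v then 1 else 0) +
        (if A.sdst ((a :: l).getLast (by simp)) = v then 1 else 0) := by
  intro l
  induction l with
  | nil =>
    intro a _
    rw [usedAt_cons, List.getLast_singleton]
    simp [usedAt]
  | cons b t ih =>
    intro a hch
    have hch' : (b :: t).Chain' (fun x y => A.sdst x = A.ssrc y) := hch.tail
    have hab : A.sdst a = A.ssrc b := List.isChain_cons_cons.mp hch |>.1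
    have := ih b hch'
    rw [usedAt_cons]
    push_cast
    rw [this]
    have hlast : (a :: b :: t).getLast (by simp) = (b :: t).getLast (by simp) := by
      rw [List.getLast_cons]
    rw [hlast, hab]
    generalize (if A.ssrc b = v then (1:ZMod 2) else 0) = x
    ring_nf
    generalize (if A.ssrc a = v then (1:ZMod 2) else 0) = y
    generalize (if A.sdst ((b :: t).getLast (by simp)) = v then (1:ZMod 2) else 0) = z
    have : x + x = 0 := by
      have : (2 : ZMod 2) = 0 := by decide
      calc x + x = 2 * x := by ring
      _ = 0 := by rw [this]; ring
    linear_combination this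

lemma usedAt_eq_degIn (l : List (Step A)) (hnd : (l.map Prod.fst).Nodup) (v : A.V) :
    A.usedAt l v = A.degIn (A.edgesOf l) v := by
  induction l with
  | nil => simp [usedAt, degIn, edgesOf]
  | cons s t ih =>
    have hnd' : (t.map Prod.fst).Nodup := by
      simpa using hnd.tail
    have hmem : s.1 ∉ A.edgesOf t := by
      simp only [edgesOf, List.mem_toFinset, List.mem_map]
      rintro ⟨x, hx, hx1⟩
      have : s.1 ∈ t.map Prod.fst := List.mem_map.mpr ⟨x, hx, hx1⟩
      simp only [List.map_cons, List.nodup_cons] at hnd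
      exact hnd.1 this
    have hedges : A.edgesOf (s :: t) = insert s.1 (A.edgesOf t) := by
      simp [edgesOf]
    rw [usedAt_cons, ih hnd', hedges]
    unfold degIn
    rw [Finset.filter_insert, Finset.filter_insert]
    have h1 : (if A.ssrc s = v then 1 else 0) + (if A.sdst s = v then 1 else 0) =
        (if A.fst s.1 = v then 1 else 0) + (if A.snd s.1 = v then 1 else 0) := by
      unfold ssrc sdst
      cases s.2 <;> simp <;> ring
    have hm1 : s.1 ∉ (A.edgesOf t).filter (fun e => A.fst e = v) := fun h =>
      hmem (Finset.mem_of_mem_filter _ h)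
    have hm2 : s.1 ∉ (A.edgesOf t).filter (fun e => A.snd e = v) := fun h =>
      hmem (Finset.mem_of_mem_filter _ h)
    by_cases c1 : A.fst s.1 = v <;> by_cases c2 : A.snd s.1 = v <;>
      simp [c1, c2, Finset.card_insert_of_notMem, hm1, hm2, h1] <;> omega
lemma extend_to_closed (U : Finset A.E) (hU : ∀ v, Even (A.degIn U v)) :
    ∀ (k : ℕ) (l : List (Step A)), A.Good l → l ≠ [] → A.edgesOf l ⊆ U →
      (U \ A.edgesOf l).card ≤ k →
      ∃ m, A.Good (l ++ m) ∧ A.edgesOf (l ++ m) ⊆ U ∧ A.Closed (l ++ m) := by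
  intro k
  induction k with
  | zero =>
    intro l hg hne hsub hcard
    refine ⟨[], by simpa using hg, by simpa using hsub, ?_⟩
    -- U \ edges l is empty
    have hempty : U \ A.edgesOf l = ∅ := Finset.card_eq_zero.mp (Nat.le_zero.mp hcard)
    -- closed: otherwise parity gives an edge in the empty set
    simp only [List.append_nil]
    intro a ha b hb
    by_contra hcl
    obtain ⟨a', l', rfl⟩ := List.exists_cons_of_ne_nil hne
    have ha' : a = a' := by symm; simpa using ha
    have hb' : b = (a' :: l').getLast (by simp) := by
      symm; rw [List.getLast?_eq_getLast (l := a' :: l') (by simp)] at hb; simpa using hb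
    subst ha'
    set w := A.sdst b with hw
    have hpar := A.usedAt_parity w l' a hg.1
    rw [← hb'] at hpar
    have h1 : (if A.ssrc a = w then (1:ZMod 2) else 0) = 0 := by
      rw [if_neg]; intro h; exact hcl h.symm
    have h2 : (if A.sdst b = w then (1:ZMod 2) else 0) = 1 := if_pos rfl
    rw [h1, h2, zero_add] at hpar
    have hodd : ¬ Even (A.usedAt (a :: l') w) := by
      intro hev
      have : (A.usedAt (a :: l') w : ZMod 2) = 0 := by
        obtain ⟨t, ht⟩ := hev
        push_cast [ht]; ring_nf; 
        rw [show ((2:ZMod 2)) = 0 by decide]; ring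
      rw [hpar] at this; exact one_ne_zero this
    have hsplit := A.degIn_split hsub w
    rw [← A.usedAt_eq_degIn _ hg.2 w] at hsplit
    have : A.degIn (U \ A.edgesOf (a :: l')) w = 0 := by rw [hempty]; simp [degIn]
    obtain ⟨t, ht⟩ := hU w
    rcases Nat.even_or_odd (A.usedAt (a :: l') w) with hev | hov
    · exact hodd hev
    · obtain ⟨r, hr⟩ := hov
      omega
  | succ k ih =>
    intro l hg hne hsub hcard
    obtain ⟨a', l', rfl⟩ := List.exists_cons_of_ne_nil hne
    set lb := (a' :: l').getLast (by simp) with hlb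
    by_cases hcl : A.sdst lb = A.ssrc a'
    · refine ⟨[], by simpa using hg, by simpa using hsub, ?_⟩
      simp only [List.append_nil]
      intro a ha b hb
      have ha' : a = a' := by symm; simpa using ha
      have hb' : b = lb := by
        symm; rw [List.getLast?_eq_getLast (l := a' :: l') (by simp)] at hb; simpa [hlb] using hb
      rw [ha', hb']; exact hcl
    · -- extend by one step at w := sdst lb
      set w := A.sdst lb with hw
      have hpar := A.usedAt_parity w l' a' hg.1
      rw [← hlb] at hpar
      have h1 : (if A.ssrc a' = w then (1:ZMod 2) else 0) = 0 := by
        rw [if_neg]; intro h; exact hcl h.symm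
      rw [h1, if_pos rfl, zero_add] at hpar
      have hodd : ¬ Even (A.usedAt (a' :: l') w) := by
        intro hev
        have : (A.usedAt (a' :: l') w : ZMod 2) = 0 := by
          obtain ⟨t, ht⟩ := hev
          push_cast [ht]; ring_nf
          rw [show ((2:ZMod 2)) = 0 by decide]; ring
        rw [hpar] at this; exact one_ne_zero this
      have hsplit := A.degIn_split hsub w
      rw [← A.usedAt_eq_degIn _ hg.2 w] at hsplit
      have hpos : A.degIn (U \ A.edgesOf (a' :: l')) w ≠ 0 := by
        intro h0
        apply hodd
        obtain ⟨t, ht⟩ := hU w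
        rcases Nat.even_or_odd (A.usedAt (a' :: l') w) with hev | hov
        · exact hev
        · obtain ⟨r, hr⟩ := hov
          omega
      obtain ⟨e, he, hor⟩ := A.exists_edge_of_degIn_pos hpos
      have heU : e ∈ U := (Finset.mem_sdiff.mp he).1
      have heNot : e ∉ A.edgesOf (a' :: l') := (Finset.mem_sdiff.mp he).2
      set s : Step A := (e, if A.fst e = w then false else true) with hs
      have hsrc : A.ssrc s = w := by
        by_cases h : A.fst e = w
        · simp [hs, ssrc, h]
        · have : A.snd e = w := hor.resolve_left h
          simp [hs, ssrc, h, this]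
      have hgood : A.Good ((a' :: l') ++ [s]) := by
        constructor
        · refine List.isChain_append.mpr ?_
          refine ⟨hg.1, List.isChain_singleton _, ?_⟩
        
          intro x hx y hy
          have hx' : x = lb := by
            symm; rw [List.getLast?_eq_getLast (l := a' :: l') (by simp)] at hx; simpa [hlb] using hx
          have hy' : y = s := by symm; simpa using hy
          rw [hx', hy', hsrc]
        · rw [List.map_append, List.nodup_append]
          refine ⟨hg.2, by simp, ?_⟩
          intro x hx
          simp only [List.map_cons, List.map_nil, List.mem_singleton]
          intro b hb hxe
          apply heNot
          rw [hxe, hb] at hx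
          exact List.mem_toFinset.mpr hx
      have hsub' : A.edgesOf ((a' :: l') ++ [s]) ⊆ U := by
        unfold edgesOf
        intro x hx
        rw [List.map_append, List.toFinset_append, Finset.mem_union] at hx
        rcases hx with hx | hx
        · exact hsub hx
        · simp only [List.map_cons, List.map_nil, List.toFinset_cons, List.toFinset_nil,
            LawfulSingleton.insert_empty_eq, Finset.mem_singleton] at hx
          rw [hx]; exact heU
      have hcard' : (U \ A.edgesOf ((a' :: l') ++ [s])).card ≤ k := by
        have hss : U \ A.edgesOf ((a' :: l') ++ [s]) ⊂ U \ A.edgesOf (a' :: l') := by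
          constructor
          · intro x hx
            rw [Finset.mem_sdiff] at hx ⊢
            refine ⟨hx.1, fun hmem => hx.2 ?_⟩
            unfold edgesOf at hmem ⊢
            rw [List.map_append, List.toFinset_append, Finset.mem_union]
            exact Or.inl hmem
          · intro hsup
            have : e ∈ U \ A.edgesOf ((a' :: l') ++ [s]) := hsup he
            rw [Finset.mem_sdiff] at this
            apply this.2
            unfold edgesOf
            rw [List.map_append, List.toFinset_append, Finset.mem_union]
            right; simp [hs]
        have := Finset.card_lt_card hss
        omega
      obtain ⟨m, hm1, hm2, hm3⟩ := ih ((a' :: l') ++ [s]) hgood (by simp) hsub' hcard'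
      refine ⟨[s] ++ m, ?_, ?_, ?_⟩
      · rw [← List.append_assoc]; exact hm1
      · rw [← List.append_assoc]; exact hm2
      · rw [← List.append_assoc]; exact hm3
lemma closed_trail_of_edge (U : Finset A.E) (hU : ∀ v, Even (A.degIn U v))
    (s0 : Step A) (h0 : s0.1 ∈ U) :
    ∃ m, A.Good (s0 :: m) ∧ A.edgesOf (s0 :: m) ⊆ U ∧ A.Closed (s0 :: m) := by
  have hsub : A.edgesOf [s0] ⊆ U := by
    intro x hx
    simp only [edgesOf, List.map_cons, List.map_nil, List.toFinset_cons, List.toFinset_nil,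
      LawfulSingleton.insert_empty_eq, Finset.mem_singleton] at hx
    rw [hx]; exact h0
  obtain ⟨m, h1, h2, h3⟩ := A.extend_to_closed U hU (U \ A.edgesOf [s0]).card [s0]
    ⟨List.isChain_singleton _, by simp⟩ (by simp) hsub le_rfl
  exact ⟨m, by simpa using h1, by simpa using h2, by simpa using h3⟩

lemma endpoints_mem_visited {l : List (Step A)} (hg : A.Good l) (hc : A.Closed l)
    {e : A.E} (he : e ∈ A.edgesOf l) : A.fst e ∈ A.visited l ∧ A.snd e ∈ A.visited l := by
  obtain ⟨s, hs, hse⟩ : ∃ s ∈ l, s.1 = e := by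
    simpa [edgesOf, List.mem_map] using he
  have hsrc : A.ssrc s ∈ A.visited l := by
    simp only [visited, List.mem_toFinset, List.mem_map]
    exact ⟨s, hs, rfl⟩
  have hdst : A.sdst s ∈ A.visited l := by
    obtain ⟨l1, l2, rfl⟩ := List.append_of_mem hs
    cases l2 with
    | cons c l2' =>
      have := (List.isChain_append.mp hg.1).2.1
      have hrel : A.sdst s = A.ssrc c := (List.isChain_cons_cons.mp this).1
      rw [hrel]
      simp only [visited, List.mem_toFinset, List.mem_map]
      exact ⟨c, by simp, rfl⟩
    | nil =>
      have hne : l1 ++ [s] ≠ [] := by simp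
      have hlast : (l1 ++ [s]).getLast? = some s := by
        rw [List.getLast?_append_of_ne_nil _ (by simp)]; rfl
      have hhead : ∃ a, (l1 ++ [s]).head? = some a := by
        cases l1 with
        | nil => exact ⟨s, rfl⟩
        | cons a t => exact ⟨a, rfl⟩
      obtain ⟨a, ha⟩ := hhead
      have := hc a ha s hlast
      rw [this]
      simp only [visited, List.mem_toFinset, List.mem_map]
      refine ⟨a, ?_, rfl⟩
      have : a ∈ (l1 ++ [s]).head? := ha
      exact List.mem_of_mem_head? this
  constructor
  · cases hb : s.2
    · rw [← hse]; simpa [ssrc, hb] using hsrc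
    · rw [← hse]; simpa [sdst, hb] using hdst
  · cases hb : s.2
    · rw [← hse]; simpa [sdst, hb] using hdst
    · rw [← hse]; simpa [ssrc, hb] using hsrc

lemma crossing {l : List (Step A)} (hg : A.Good l) (hc : A.Closed l)
    {u w : A.V} (hrt : Relation.ReflTransGen (A.LinkedIn Finset.univ) u w)
    (hw : w ∈ A.visited l) :
    u ∈ A.visited l ∨ ∃ e, e ∉ A.edgesOf l ∧ (A.fst e ∈ A.visited l ∨ A.snd e ∈ A.visited l) := by
  induction hrt using Relation.ReflTransGen.head_induction_on with
  | refl => exact Or.inl hw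
  | head hab _ ih =>
    rename_i x y _
    rcases ih with hy | hex
    · obtain ⟨e, _, hor⟩ := hab
      by_cases hmem : e ∈ A.edgesOf l
      · have := A.endpoints_mem_visited hg hc hmem
        rcases hor with ⟨h1, h2⟩ | ⟨h1, h2⟩
        · exact Or.inl (h1 ▸ this.1)
        · exact Or.inl (h2 ▸ this.2)
      · refine Or.inr ⟨e, hmem, ?_⟩
        rcases hor with ⟨h1, h2⟩ | ⟨h1, h2⟩
        · exact Or.inr (h2 ▸ hy)
        · exact Or.inl (h1 ▸ hy)
    · exact Or.inr hex
lemma usedAt_even_of_closed {l : List (Step A)} (hch : l.Chain' (fun a b => A.sdst a = A.ssrc b))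
    (hc : A.Closed l) (v : A.V) : Even (A.usedAt l v) := by
  cases l with
  | nil => simp [usedAt]
  | cons a t =>
    have hpar := A.usedAt_parity v t a hch
    have hcl : A.sdst ((a :: t).getLast (by simp)) = A.ssrc a := by
      exact hc a rfl _ (List.getLast?_eq_getLast (by simp))
    rw [hcl] at hpar
    have : (A.usedAt (a :: t) v : ZMod 2) = 0 := by
      rw [hpar]
      by_cases h : A.ssrc a = v <;> simp [h] <;> decide
    rw [ZMod.natCast_eq_zero_iff] at this
    exact (even_iff_two_dvd).mpr this

lemma euler_aux (hconn : ∀ u v : A.V, Relation.ReflTransGen (A.LinkedIn Finset.univ) u v)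
    (heven : ∀ v, Even (A.degIn Finset.univ v)) :
    ∀ (k : ℕ) (l : List (Step A)), A.Good l → A.Closed l → l ≠ [] →
      (Finset.univ \ A.edgesOf l).card ≤ k →
      ∃ l', A.Good l' ∧ A.Closed l' ∧ l' ≠ [] ∧ A.edgesOf l' = Finset.univ := by
  intro k
  induction k with
  | zero =>
    intro l hg hc hne hcard
    refine ⟨l, hg, hc, hne, ?_⟩
    have : Finset.univ \ A.edgesOf l = ∅ := Finset.card_eq_zero.mp (Nat.le_zero.mp hcard)
    have hsub : (Finset.univ : Finset A.E) ⊆ A.edgesOf l := by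
      intro x hx
      by_contra hxn
      have : x ∈ Finset.univ \ A.edgesOf l := Finset.mem_sdiff.mpr ⟨hx, hxn⟩
      rw [‹Finset.univ \ A.edgesOf l = ∅›] at this
      exact absurd this (Finset.notMem_empty x)
    exact Finset.univ_subset_iff.mp hsub
  | succ k ih =>
    intro l hg hc hne hcard
    by_cases hdone : Finset.univ \ A.edgesOf l = ∅
    · refine ⟨l, hg, hc, hne, ?_⟩
      apply Finset.univ_subset_iff.mp
      intro x hx
      by_contra hxn
      have : x ∈ Finset.univ \ A.edgesOf l := Finset.mem_sdiff.mpr ⟨hx, hxn⟩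
      rw [hdone] at this
      exact absurd this (Finset.notMem_empty x)
    · obtain ⟨e1, he1⟩ := Finset.nonempty_of_ne_empty hdone
      have he1' : e1 ∉ A.edgesOf l := (Finset.mem_sdiff.mp he1).2
      -- head of l is visited
      have hu0 : A.ssrc (l.head hne) ∈ A.visited l := by
        simp only [visited, List.mem_toFinset, List.mem_map]
        exact ⟨l.head hne, List.head_mem hne, rfl⟩
      -- find an unused edge with a visited endpoint
      have hcross := A.crossing hg hc (hconn (A.fst e1) (A.ssrc (l.head hne))) hu0
      obtain ⟨e, heNot, hend⟩ :
          ∃ e, e ∉ A.edgesOf l ∧ (A.fst e ∈ A.visited l ∨ A.snd e ∈ A.visited l) := by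
        rcases hcross with h | h
        · exact ⟨e1, he1', Or.inl h⟩
        · exact h
      -- choose the step direction so that its source is visited
      set s0 : Step A := (e, if A.fst e ∈ A.visited l then false else true) with hs0
      have hx : A.ssrc s0 ∈ A.visited l := by
        by_cases h : A.fst e ∈ A.visited l
        · simpa [hs0, ssrc, h] using h
        · have h2 := hend.resolve_left h
          simpa [hs0, ssrc, h] using h2
      set x := A.ssrc s0 with hxdef
      -- the complement is even
      set U' := Finset.univ \ A.edgesOf l with hU'def
      have hU' : ∀ v, Even (A.degIn U' v) := by
        intro v
        have hsplit := A.degIn_split (Finset.subset_univ (A.edgesOf l)) v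
        rw [← hU'def] at hsplit
        have hused := A.usedAt_eq_degIn l hg.2 v
        have heu := A.usedAt_even_of_closed hg.1 hc v
        obtain ⟨t1, ht1⟩ := heven v
        obtain ⟨t2, ht2⟩ := heu
        refine ⟨t1 - t2, ?_⟩
        omega
      have hs0U : s0.1 ∈ U' := Finset.mem_sdiff.mpr ⟨Finset.mem_univ e, heNot⟩
      obtain ⟨m, hmg, hmsub, hmc⟩ := A.closed_trail_of_edge U' hU' s0 hs0U
      set mfull := s0 :: m with hmfull
      -- decompose l at a step with source x
      obtain ⟨sx, hsxl, hsx⟩ : ∃ sx ∈ l, A.ssrc sx = x := by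
        simpa [visited, List.mem_map] using hx
      obtain ⟨l1, l2, rfl⟩ := List.append_of_mem hsxl
      -- chain facts about l
      have hchl := hg.1
      have c1 : l1.Chain' (fun a b => A.sdst a = A.ssrc b) := (List.isChain_append.mp hchl).1
      have c2 : (sx :: l2).Chain' (fun a b => A.sdst a = A.ssrc b) :=
        (List.isChain_append.mp hchl).2.1
      have cj : ∀ p ∈ l1.getLast?, A.sdst p = A.ssrc sx := by
        intro p hp
        exact (List.isChain_append.mp hchl).2.2 p hp sx rfl
      set newl := l1 ++ (mfull ++ sx :: l2) with hnewl
      have hmx : ∀ b ∈ mfull.getLast?, A.sdst b = x := by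
        intro b hb
        have := hmc s0 rfl b hb
        rw [this]
      -- Good newl
      have hgood : A.Good newl := by
        constructor
        · rw [hnewl]; refine List.isChain_append.mpr ?_
          refine ⟨c1, ?_, ?_⟩
          · rw [List.isChain_append]
            refine ⟨hmg.1, c2, ?_⟩
            intro p hp q hq
            have hq' : q = sx := by symm; simpa using hq
            rw [hq', hsx]
            exact hmx p hp
          · intro p hp q hq
            have hq' : q = s0 := by
              rw [hmfull] at hq
              simp only [List.cons_append, List.head?_cons] at hq
              symm; simpa using hq
            rw [hq', ← hxdef]
            exact (cj p hp).trans hsx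
        · -- Nodup via permutation to mfull ++ (l1 ++ sx :: l2)
          have hperm : newl.Perm (mfull ++ (l1 ++ sx :: l2)) := by
            rw [hnewl, ← List.append_assoc, ← List.append_assoc]
            exact (List.perm_append_comm.append_right (sx :: l2))
          have hpm : (newl.map Prod.fst).Perm ((mfull ++ (l1 ++ sx :: l2)).map Prod.fst) :=
            hperm.map Prod.fst
          apply hpm.nodup_iff.mpr
          rw [List.map_append, List.nodup_append]
          refine ⟨hmg.2, hg.2, ?_⟩
          intro a ha b hb hab
          subst hab
          have haU : a ∈ U' := hmsub (List.mem_toFinset.mpr ha)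
          have : a ∉ A.edgesOf (l1 ++ sx :: l2) := (Finset.mem_sdiff.mp haU).2
          exact this (List.mem_toFinset.mpr hb)
      -- Closed newl
      have hclosed : A.Closed newl := by
        intro a ha b hb
        have hlast : newl.getLast? = (l1 ++ sx :: l2).getLast? := by
          rw [hnewl, List.getLast?_append_of_ne_nil _ (by simp),
            List.getLast?_append_of_ne_nil _ (by simp),
            List.getLast?_append_of_ne_nil _ (by simp)]
        rw [hlast] at hb
        cases hl1 : l1 with
        | nil =>
          have ha' : a = s0 := by
            rw [hnewl, hl1] at ha
            simp only [List.nil_append, hmfull, List.cons_append, List.head?_cons] at ha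
            symm; simpa using ha
          have := hc (sx) (by rw [hl1]; rfl) b hb
          rw [ha', ← hxdef, ← hsx]
          exact this
        | cons a1 t1 =>
          have ha' : a = a1 := by
            rw [hnewl, hl1] at ha
            simp only [List.cons_append, List.head?_cons] at ha
            symm; simpa using ha
          have := hc a1 (by rw [hl1]; rfl) b hb
          rw [ha']
          exact this
      -- edges grow strictly
      have hsubnew : A.edgesOf (l1 ++ sx :: l2) ⊆ A.edgesOf newl := by
        intro y hy
        simp only [edgesOf, List.mem_toFinset, List.mem_map] at hy ⊢
        obtain ⟨p, hp, hpe⟩ := hy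
        rw [List.mem_append] at hp
        refine ⟨p, ?_, hpe⟩
        rw [hnewl]
        rcases hp with h | h
        · exact List.mem_append.mpr (Or.inl h)
        · exact List.mem_append.mpr (Or.inr (List.mem_append.mpr (Or.inr h)))
      have henew : e ∈ A.edgesOf newl := by
        simp only [edgesOf, List.mem_toFinset, List.mem_map]
        refine ⟨s0, ?_, rfl⟩
        rw [hnewl, hmfull]
        simp
      have hlt : (Finset.univ \ A.edgesOf newl).card < (Finset.univ \ A.edgesOf (l1 ++ sx :: l2)).card := by
        apply Finset.card_lt_card
        constructor
        · intro y hy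
          rw [Finset.mem_sdiff] at hy ⊢
          exact ⟨hy.1, fun hmem => hy.2 (hsubnew hmem)⟩
        · intro hsup
          have : e ∈ Finset.univ \ A.edgesOf newl :=
            hsup (Finset.mem_sdiff.mpr ⟨Finset.mem_univ e, heNot⟩)
          exact (Finset.mem_sdiff.mp this).2 henew
      rw [← hU'def] at hlt
      exact ih newl hgood hclosed (by simp [hnewl, hmfull]) (by omega)

lemma euler (hconn : ∀ u v : A.V, Relation.ReflTransGen (A.LinkedIn Finset.univ) u v)
    (heven : ∀ v, Even (A.degIn Finset.univ v)) (e0 : A.E) :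
    ∃ l, A.Good l ∧ A.Closed l ∧ l ≠ [] ∧ A.edgesOf l = Finset.univ := by
  obtain ⟨m, h1, h2, h3⟩ := A.closed_trail_of_edge Finset.univ heven (e0, false)
    (Finset.mem_univ _)
  exact A.euler_aux hconn heven (Finset.univ \ A.edgesOf ((e0, false) :: m)).card
    ((e0, false) :: m) h1 h3 (by simp) le_rfl
lemma list_prod_pm : ∀ (M : List ℤ), (∀ x ∈ M, x = 1 ∨ x = -1) → M.prod = 1 ∨ M.prod = -1 := by
  intro M
  induction M with
  | nil => intro _; left; simp
  | cons a t ih =>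
    intro h
    have ha := h a (by simp)
    have ht := ih (fun x hx => h x (by simp [hx]))
    rw [List.prod_cons]
    rcases ha with h1 | h1 <;> rcases ht with h2 | h2 <;> simp [h1, h2]

lemma euler_signing (hconn : ∀ u v : A.V, Relation.ReflTransGen (A.LinkedIn Finset.univ) u v)
    (heven : ∀ v, Even (A.degIn Finset.univ v)) (σ : A.E → ℤ)
    (hσ : ∀ e, σ e = 1 ∨ σ e = -1) (hprod : ∏ e : A.E, σ e = 1) :
    ∃ c : A.E → Bool → ℤ,
      (∀ e, (c e false = 1 ∨ c e false = -1) ∧ (c e true = 1 ∨ c e true = -1) ∧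
        c e false * c e true = - σ e) ∧
      (∀ v, ∑ e : A.E, ((if A.fst e = v then c e false else 0) +
        (if A.snd e = v then c e true else 0)) = 0) := by
  by_cases hE : IsEmpty A.E
  · refine ⟨fun _ _ => 1, fun e => (hE.elim e), fun v => ?_⟩
    rw [Finset.sum_eq_zero]
    intro e _
    exact (hE.elim e)
  · rw [not_isEmpty_iff] at hE
    obtain ⟨e0⟩ := hE
    obtain ⟨l, hg, hc, hne, hcov⟩ := A.euler hconn heven e0
    obtain ⟨a0, l', rfl⟩ := List.exists_cons_of_ne_nil hne
    set L := a0 :: l' with hL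
    set n := l'.length with hn
    have hm : L.length = n + 1 := by simp [hL, hn]
    -- step at index i
    set St : Fin (n + 1) → Step A := fun i => L.get (Fin.cast hm.symm i) with hSt
    set g : Fin (n + 1) → A.E := fun i => (St i).1 with hg'
    -- g is bijective
    have hginj : Function.Injective g := by
      intro i j hij
      have hnd := hg.2
      rw [List.nodup_iff_injective_get] at hnd
      have : (L.map Prod.fst).get (Fin.cast (by simp [hm]) i) =
          (L.map Prod.fst).get (Fin.cast (by simp [hm]) j) := by
        simp only [List.get_eq_getElem, List.getElem_map]
        exact hij
      have h2 := hnd this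
      have h4 : (i : ℕ) = (j : ℕ) := by simpa using congrArg Fin.val h2
      exact Fin.ext h4
    have hgsur : Function.Surjective g := by
      intro e
      have : e ∈ A.edgesOf L := hcov ▸ Finset.mem_univ e
      simp only [edgesOf, List.mem_toFinset, List.mem_map] at this
      obtain ⟨s, hsl, hse⟩ := this
      obtain ⟨i, hi⟩ := List.mem_iff_get.mp hsl
      refine ⟨Fin.cast hm i, ?_⟩
      simp only [hg', hSt]
      have : Fin.cast hm.symm (Fin.cast hm i) = i := rfl
      rw [this, hi, hse]
    have hgbij : Function.Bijective g := ⟨hginj, hgsur⟩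
    set eqv := Equiv.ofBijective g hgbij with heqv
    -- partial products of signs
    set sg : ℕ → ℤ := fun k => ((L.map fun s => σ s.1).take k).prod with hsg
    have hsg0 : sg 0 = 1 := by simp [hsg]
    have hsgpm : ∀ k, sg k = 1 ∨ sg k = -1 := by
      intro k
      apply list_prod_pm
      intro x hx
      have := List.take_subset k (L.map fun s => σ s.1) hx
      simp only [List.mem_map] at this
      obtain ⟨s, _, rfl⟩ := this
      exact hσ s.1
    have hsgsucc : ∀ (i : Fin (n + 1)), sg ((i : ℕ) + 1) = sg i * σ (g i) := by
      intro i
      have hlt : (i : ℕ) < (L.map fun s => σ s.1).length := by simp [hm]; have := i.2; omega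
      have h := List.prod_take_succ (L.map fun s => σ s.1) i hlt
      have hget : (L.map fun s => σ s.1)[(i : ℕ)] = σ (g i) := by
        rw [List.getElem_map]; rfl
      show (List.take ((i : ℕ) + 1) (L.map fun s => σ s.1)).prod =
        (List.take (i : ℕ) (L.map fun s => σ s.1)).prod * σ (g i)
      rw [h, hget]
    have hsgtop : sg (n + 1) = 1 := by
      have h1 : (L.map fun s => σ s.1).take (n + 1) = L.map fun s => σ s.1 := by
        apply List.take_of_length_le
        simp [hm]
      rw [hsg]
      simp only [h1]
      have h2 : L = List.ofFn L.get := (List.ofFn_get L).symm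
      rw [h2, List.map_ofFn, List.prod_ofFn]
      have h3 : ∀ i : Fin (L.length), ((fun s => σ s.1) ∘ L.get) i = σ (g (Fin.cast hm i)) := by
        intro i
        simp only [Function.comp_apply, hg', hSt]
        congr 1
      rw [Finset.prod_congr rfl (fun i _ => h3 i)]
      rw [← hprod]
      exact Fintype.prod_equiv ((finCongr hm).trans eqv) _ _ (fun i => rfl)
    -- define the signing
    set c : A.E → Bool → ℤ := fun e b =>
      if b = (St (eqv.symm e)).2 then sg (eqv.symm e : ℕ)
      else -σ e * sg (eqv.symm e : ℕ) with hcdef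
    have hci : ∀ i : Fin (n + 1), eqv.symm (g i) = i := by
      intro i
      exact eqv.symm_apply_apply i
    refine ⟨c, ?_, ?_⟩
    · intro e
      rcases hsgpm (eqv.symm e : ℕ) with h1 | h1 <;> rcases hσ e with h2 | h2 <;>
        by_cases h3 : (St (eqv.symm e)).2 = false
      all_goals
        simp only [hcdef, h3]
        try simp only [Bool.not_eq_false] at h3
        try simp only [h3]
        norm_num [h1, h2]
    · -- boundary vanishes
      intro v
      have hre : ∑ e : A.E, ((if A.fst e = v then c e false else 0) +
          (if A.snd e = v then c e true else 0)) =
          ∑ i : Fin (n + 1), ((if A.fst (g i) = v then c (g i) false else 0) +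
          (if A.snd (g i) = v then c (g i) true else 0)) :=
        (Fintype.sum_bijective g hgbij _ _ (fun i => rfl)).symm
      rw [hre]
      have hterm : ∀ i : Fin (n + 1),
          ((if A.fst (g i) = v then c (g i) false else 0) +
            (if A.snd (g i) = v then c (g i) true else 0)) =
          (if A.ssrc (St i) = v then sg (i : ℕ) else 0) -
          (if A.sdst (St i) = v then sg ((i : ℕ) + 1) else 0) := by
        intro i
        have hcs : ∀ b, c (g i) b = if b = (St i).2 then sg (i : ℕ) else -σ (g i) * sg (i : ℕ) := by
          intro b
          simp only [hcdef, hci]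
        have hfs : A.fst (g i) = (if (St i).2 then A.sdst (St i) else A.ssrc (St i)) := by
          cases h : (St i).2 <;> simp [ssrc, sdst, h, hg']
        have hsn : A.snd (g i) = (if (St i).2 then A.ssrc (St i) else A.sdst (St i)) := by
          cases h : (St i).2 <;> simp [ssrc, sdst, h, hg']
        rw [hsgsucc i]
        cases h : (St i).2 <;>
          rw [hcs, hcs, hfs, hsn] <;>
          by_cases h1 : A.ssrc (St i) = v <;> by_cases h2 : A.sdst (St i) = v <;>
          simp [h, h1, h2] <;>
          ring
      rw [Finset.sum_congr rfl (fun i _ => hterm i)]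
      rw [Finset.sum_sub_distrib]
      have hshift : ∀ i : Fin (n + 1),
          (if A.sdst (St i) = v then sg ((i : ℕ) + 1) else 0) =
          (if A.ssrc (St (i + 1)) = v then sg ((i + 1 : Fin (n + 1)) : ℕ) else 0) := by
        intro i
        by_cases hil : (i : ℕ) < n
        · have hval : ((i + 1 : Fin (n + 1)) : ℕ) = (i : ℕ) + 1 := by
            have : i < Fin.last n := by
              rw [Fin.lt_def]; simpa using hil
            exact Fin.val_add_one_of_lt this
          have hdd : A.sdst (St i) = A.ssrc (St (i + 1)) := by
            have hch := List.isChain_iff_getElem.mp hg.1 (i : ℕ) (by simp [hm]; omega)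
            have e1 : L.get ⟨(i : ℕ), by omega⟩ = St i := rfl
            have e2 : L.get ⟨(i : ℕ) + 1, by simp [hm]; omega⟩ = St (i + 1) := by
              simp only [hSt]
              congr 1
              exact Fin.ext (by simp [hval])
            rw [← e1, ← e2]
            exact hch
          rw [hdd, hval]
        · -- i = last
          have hieq : (i : ℕ) = n := by omega
          have hlast : i = Fin.last n := Fin.ext (by simpa using hieq)
          have hwrap : i + 1 = 0 := by rw [hlast]; exact Fin.last_add_one n
          have hdd : A.sdst (St i) = A.ssrc (St 0) := by
            have hgl : L.getLast (by simp) = St i := by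
              rw [List.getLast_eq_getElem]
              simp [hSt, hm, hieq]
            have hhd : L.head? = some (St 0) := by
              have : St 0 = a0 := rfl
              rw [this]; rfl
            have := hc (St 0) hhd (L.getLast (by simp))
              (List.getLast?_eq_getLast (by simp))
            rw [hgl] at this
            exact this
          rw [hdd, hwrap, hieq, hsgtop]
          simp [hsg0]
      rw [Finset.sum_congr rfl (fun i _ => hshift i)]
      have := Equiv.sum_comp (Equiv.addRight (1 : Fin (n + 1)))
        (fun j => if A.ssrc (St j) = v then sg (j : ℕ) else 0)
      simp only [Equiv.coe_addRight] at this
      rw [sub_eq_zero]; exact this.symm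
lemma tog_subset {J K F : Finset A.E} (hJ : J ⊆ F) (hK : K ⊆ F) : A.tog J K ⊆ F := by
  intro x hx
  rcases Finset.mem_union.mp (Finset.mem_sdiff.mp hx).1 with h | h
  · exact hJ h
  · exact hK h

lemma card_tog_parity (J K : Finset A.E) (p : A.E → Prop) [DecidablePred p] :
    (((A.tog J K).filter p).card : ZMod 2) = ((J.filter p).card : ZMod 2) +
      ((K.filter p).card : ZMod 2) := by
  have hfil : (A.tog J K).filter p = ((J.filter p) ∪ (K.filter p)) \ ((J.filter p) ∩ (K.filter p)) := by
    ext x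
    simp only [tog, Finset.mem_filter, Finset.mem_sdiff, Finset.mem_union, Finset.mem_inter]
    tauto
  have hsub : (J.filter p) ∩ (K.filter p) ⊆ (J.filter p) ∪ (K.filter p) :=
    (Finset.inter_subset_left).trans Finset.subset_union_left
  have h1 : (((J.filter p) ∪ (K.filter p)) \ ((J.filter p) ∩ (K.filter p))).card =
      ((J.filter p) ∪ (K.filter p)).card - ((J.filter p) ∩ (K.filter p)).card :=
    Finset.card_sdiff_of_subset hsub
  have h2 := Finset.card_union_add_card_inter (J.filter p) (K.filter p)
  have h3 : ((J.filter p) ∩ (K.filter p)).card ≤ ((J.filter p) ∪ (K.filter p)).card :=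
    Finset.card_le_card hsub
  rw [hfil, h1]
  have key : ((J.filter p) ∪ (K.filter p)).card - ((J.filter p) ∩ (K.filter p)).card +
      2 * ((J.filter p) ∩ (K.filter p)).card = (J.filter p).card + (K.filter p).card := by
    omega
  calc ((((J.filter p) ∪ (K.filter p)).card - ((J.filter p) ∩ (K.filter p)).card : ℕ) : ZMod 2)
      = ((((J.filter p) ∪ (K.filter p)).card - ((J.filter p) ∩ (K.filter p)).card +
        2 * ((J.filter p) ∩ (K.filter p)).card : ℕ) : ZMod 2) := by
        push_cast
        rw [show ((2 : ZMod 2)) = 0 by decide]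
        ring
    _ = (((J.filter p).card + (K.filter p).card : ℕ) : ZMod 2) := by rw [key]
    _ = _ := by push_cast; ring

lemma degIn_tog_parity (J K : Finset A.E) (v : A.V) :
    ((A.degIn (A.tog J K) v : ℕ) : ZMod 2) = (A.degIn J v : ZMod 2) + (A.degIn K v : ZMod 2) := by
  unfold degIn
  push_cast
  rw [A.card_tog_parity J K (fun e => A.fst e = v), A.card_tog_parity J K (fun e => A.snd e = v)]
  ring

lemma degIn_single (e : A.E) (v : A.V) :
    A.degIn {e} v = (if A.fst e = v then 1 else 0) + (if A.snd e = v then 1 else 0) := by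
  unfold degIn
  by_cases h1 : A.fst e = v <;> by_cases h2 : A.snd e = v <;>
    simp [Finset.filter_singleton, h1, h2]

lemma tjoin_pair {F : Finset A.E} {u w : A.V}
    (hrt : Relation.ReflTransGen (A.LinkedIn F) u w) :
    ∃ J ⊆ F, ∀ v, (A.degIn J v : ZMod 2) =
      (if v = u then 1 else 0) + (if v = w then 1 else 0) := by
  induction hrt using Relation.ReflTransGen.head_induction_on with
  | refl =>
    refine ⟨∅, Finset.empty_subset _, fun v => ?_⟩
    simp [degIn]
    by_cases h : v = w <;> simp [h]
    decide
  | head hab _ ih =>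
    rename_i a b _
    obtain ⟨J1, hJ1F, hJ1⟩ := ih
    obtain ⟨e, heF, hor⟩ := hab
    refine ⟨A.tog {e} J1, A.tog_subset (by simpa using heF) hJ1F, fun v => ?_⟩
    rw [A.degIn_tog_parity, hJ1 v, A.degIn_single]
    have hcomm : ∀ (c d : A.V), (if c = d then (1:ZMod 2) else 0) = (if d = c then 1 else 0) := by
      intro c d
      by_cases h : c = d
      · simp [h]
      · rw [if_neg h, if_neg (fun hh => h hh.symm)]
    have hends : ((if A.fst e = v then (1:ZMod 2) else 0) + (if A.snd e = v then 1 else 0)) =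
        (if v = a then 1 else 0) + (if v = b then 1 else 0) := by
      rcases hor with ⟨h1, h2⟩ | ⟨h1, h2⟩ <;> rw [h1, h2, hcomm a v, hcomm b v] <;> ring
    push_cast [apply_ite (Nat.cast : ℕ → ZMod 2)]
    rw [hends]
    have hzz : ∀ x y z : ZMod 2, x + y + (y + z) = x + z := by decide
    exact hzz _ _ _

lemma zmod2_cases : ∀ x : ZMod 2, x = 0 ∨ x = 1 := by decide

lemma tjoin {F : Finset A.E} (hconn : ∀ u v : A.V, Relation.ReflTransGen (A.LinkedIn F) u v) :
    ∀ (N : ℕ) (t : A.V → ZMod 2), (Finset.univ.filter (fun v => t v = 1)).card ≤ N →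
      (∑ v : A.V, t v = 0) →
      ∃ J ⊆ F, ∀ v, (A.degIn J v : ZMod 2) = t v := by
  intro N
  induction N with
  | zero =>
    intro t hcard _
    refine ⟨∅, Finset.empty_subset _, fun v => ?_⟩
    have hempty : Finset.univ.filter (fun v => t v = 1) = ∅ :=
      Finset.card_eq_zero.mp (Nat.le_zero.mp hcard)
    have h1 : t v = 0 := by
      rcases zmod2_cases (t v) with h | h
      · exact h
      · exfalso
        have : v ∈ Finset.univ.filter (fun v => t v = 1) :=
          Finset.mem_filter.mpr ⟨Finset.mem_univ v, h⟩
        rw [hempty] at this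
        exact absurd this (Finset.notMem_empty v)
    simp [degIn, h1]
  | succ N ih =>
    intro t hcard hsum
    by_cases h0 : Finset.univ.filter (fun v => t v = 1) = ∅
    · refine ⟨∅, Finset.empty_subset _, fun v => ?_⟩
      have h1 : t v = 0 := by
        rcases zmod2_cases (t v) with h | h
        · exact h
        · exfalso
          have : v ∈ Finset.univ.filter (fun v => t v = 1) :=
            Finset.mem_filter.mpr ⟨Finset.mem_univ v, h⟩
          rw [h0] at this
          exact absurd this (Finset.notMem_empty v)
      simp [degIn, h1]
    · obtain ⟨u, hu⟩ := Finset.nonempty_of_ne_empty h0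
      have hut : t u = 1 := (Finset.mem_filter.mp hu).2
      have hw : ∃ w, w ≠ u ∧ t w = 1 := by
        by_contra hc
        push_neg at hc
        have : ∑ v : A.V, t v = t u := by
          apply Finset.sum_eq_single
          · intro b _ hb
            rcases zmod2_cases (t b) with h | h
            · exact h
            · exact absurd h (hc b hb)
          · intro h
            exact absurd (Finset.mem_univ u) h
        rw [hsum, hut] at this
        exact one_ne_zero this.symm
      obtain ⟨w, hwu, hwt⟩ := hw
      obtain ⟨J1, hJ1F, hJ1⟩ := A.tjoin_pair (hconn u w)
      set t' : A.V → ZMod 2 := fun v =>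
        t v + (if v = u then 1 else 0) + (if v = w then 1 else 0) with ht'
      have ht'v : ∀ v, v ≠ u → v ≠ w → t' v = t v := by
        intro v h1 h2
        simp [ht', h1, h2]
      have ht'u : t' u = 0 := by
        simp only [ht', hut, if_pos rfl, if_neg (Ne.symm hwu : u ≠ w)]
        decide
      have ht'w : t' w = 0 := by
        simp only [ht', hwt, if_pos rfl, if_neg hwu]
        decide
      have hsum' : ∑ v : A.V, t' v = 0 := by
        simp only [ht']
        rw [Finset.sum_add_distrib, Finset.sum_add_distrib]
        rw [Finset.sum_ite_eq' Finset.univ u (fun _ => (1 : ZMod 2))]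
        rw [Finset.sum_ite_eq' Finset.univ w (fun _ => (1 : ZMod 2))]
        simp [hsum]
        decide
      have hsupp : Finset.univ.filter (fun v => t' v = 1) =
          (Finset.univ.filter (fun v => t v = 1)) \ {u, w} := by
        ext v
        simp only [Finset.mem_filter, Finset.mem_sdiff, Finset.mem_univ, true_and,
          Finset.mem_insert, Finset.mem_singleton]
        constructor
        · intro h
          by_cases h1 : v = u
          · rw [h1] at h; rw [ht'u] at h; exact absurd h (by decide)
          · by_cases h2 : v = w
            · rw [h2] at h; rw [ht'w] at h; exact absurd h (by decide)
            · rw [ht'v v h1 h2] at h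
              exact ⟨h, fun hor => by tauto⟩
        · rintro ⟨h, hne⟩
          push_neg at hne
          rw [ht'v v hne.1 hne.2]
          exact h
      have hcard' : (Finset.univ.filter (fun v => t' v = 1)).card ≤ N := by
        rw [hsupp]
        have hsub : ({u, w} : Finset A.V) ⊆ Finset.univ.filter (fun v => t v = 1) := by
          intro x hx
          rcases Finset.mem_insert.mp hx with h | h
          · rw [h]; exact Finset.mem_filter.mpr ⟨Finset.mem_univ u, hut⟩
          · rw [Finset.mem_singleton.mp h]
            exact Finset.mem_filter.mpr ⟨Finset.mem_univ w, hwt⟩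
        have h2 : ({u, w} : Finset A.V).card = 2 := by
          rw [Finset.card_insert_of_notMem (by simpa using Ne.symm hwu)]
          simp
        rw [Finset.card_sdiff_of_subset hsub, h2]
        omega
      obtain ⟨J2, hJ2F, hJ2⟩ := ih t' hcard' hsum'
      refine ⟨A.tog J1 J2, A.tog_subset hJ1F hJ2F, fun v => ?_⟩
      rw [A.degIn_tog_parity, hJ1 v, hJ2 v]
      simp only [ht']
      have : ∀ a b c : ZMod 2, a + b + (c + a + b) = c := by decide
      exact this _ _ _
lemma handshake (U : Finset A.E) : ∑ v : A.V, A.degIn U v = 2 * U.card := by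
  unfold degIn
  rw [Finset.sum_add_distrib]
  rw [← Finset.card_eq_sum_card_fiberwise (f := A.fst) (s := U) (t := Finset.univ)
    (fun e _ => Finset.mem_univ _)]
  rw [← Finset.card_eq_sum_card_fiberwise (f := A.snd) (s := U) (t := Finset.univ)
    (fun e _ => Finset.mem_univ _)]
  ring

end Multigraph

/-- Let `(G, σ)` have an all-positive Hamiltonian circuit `H` (edge set `F`).
If the number of negative edges of `(G, σ)` is even, then `(G, σ)` admits a 3-flow `f`
(boundaries vanish, `|f e| ≤ 2`, `f` may vanish on some edges) such that every edge outside
`F` has flow value `±1`. -/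
theorem all_positive_ham_even_neg_has_three_flow
    (G : Multigraph) (hG : G.IsLoopless) (σ : G.E → ℤ) (hσ : G.IsSignature σ)
    (F : Finset G.E) (hham : G.IsHamCircuit F) (hpos : ∀ e ∈ F, σ e = 1)
    (heven : Even (G.negEdges σ).card) :
    ∃ (τ : G.E → Bool → ℤ) (f : G.E → ℤ),
      G.IsOrientation σ τ ∧ (∀ v, G.boundary τ f v = 0) ∧ (∀ e, |f e| ≤ 2) ∧
      ∀ e, e ∉ F → (f e = 1 ∨ f e = -1) := by
  obtain ⟨hVne, hFconn, hFdeg⟩ := hham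
  -- T-join J ⊆ F matching the parity of degrees of G
  set t : G.V → ZMod 2 := fun v => ((G.deg v : ℕ) : ZMod 2) with ht
  have hsumt : ∑ v : G.V, t v = 0 := by
    simp only [ht]
    rw [← Nat.cast_sum,
      show (∑ x : G.V, G.deg x) = 2 * Finset.univ.card from G.handshake Finset.univ]
    push_cast
    rw [show ((2 : ZMod 2)) = 0 by decide]
    ring
  obtain ⟨J, hJF, hJ⟩ := G.tjoin hFconn (Finset.univ.filter (fun v => t v = 1)).card t
    le_rfl hsumt
  -- the auxiliary multigraph: G plus a second copy of every edge of J
  set A : Multigraph :=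
    { V := G.V
      E := G.E ⊕ {e // e ∈ J}
      fintypeV := G.fintypeV
      decEqV := G.decEqV
      fintypeE := by infer_instance
      decEqE := by infer_instance
      fst := Sum.elim G.fst (fun j => G.fst j.1)
      snd := Sum.elim G.snd (fun j => G.snd j.1) } with hA
  set σA : A.E → ℤ := Sum.elim σ (fun j => σ j.1) with hσA
  -- connectivity of A
  have hconnA : ∀ u v : A.V, Relation.ReflTransGen (A.LinkedIn Finset.univ) u v := by
    intro u v
    refine Relation.ReflTransGen.mono ?_ _ _ (hFconn u v)
    intro x y hxy
    obtain ⟨e, heF, hor⟩ := hxy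
    exact ⟨Sum.inl e, Finset.mem_univ _, hor⟩
  -- degrees of A
  have hdegA : ∀ v, A.degIn Finset.univ v = G.deg v + G.degIn J v := by
    intro v
    unfold Multigraph.degIn Multigraph.deg Multigraph.degIn
    rw [Finset.card_filter, Finset.card_filter, Finset.card_filter, Finset.card_filter,
      Finset.card_filter, Finset.card_filter]
    rw [Fintype.sum_sum_type, Fintype.sum_sum_type]
    have hsub1 : ∑ j : {e // e ∈ J}, (if G.fst j.1 = v then 1 else 0) =
        ∑ e ∈ J, (if G.fst e = v then 1 else 0) :=
      (Finset.sum_subtype (p := fun e => e ∈ J) J (fun x => Iff.rfl)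
        (fun e => if G.fst e = v then 1 else 0)).symm
    have hsub2 : ∑ j : {e // e ∈ J}, (if G.snd j.1 = v then 1 else 0) =
        ∑ e ∈ J, (if G.snd e = v then 1 else 0) :=
      (Finset.sum_subtype (p := fun e => e ∈ J) J (fun x => Iff.rfl)
        (fun e => if G.snd e = v then 1 else 0)).symm
    rw [← hsub1, ← hsub2, add_add_add_comm]
    rfl
  have hevenA : ∀ v, Even (A.degIn Finset.univ v) := by
    intro v
    rw [hdegA v]
    have hcast : (((G.deg v + G.degIn J v : ℕ)) : ZMod 2) = 0 := by
      push_cast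
      rw [hJ v]
      simp only [ht]
      rw [show ∀ x : ZMod 2, x + x = 0 by decide]
    rw [ZMod.natCast_eq_zero_iff] at hcast
    exact (even_iff_two_dvd).mpr hcast
  -- signature of A and its product
  have hσAsig : ∀ d, σA d = 1 ∨ σA d = -1 := by
    intro d
    cases d with
    | inl e => exact hσ e
    | inr j => exact hσ j.1
  have hprodA : ∏ d : A.E, σA d = 1 := by
    rw [Fintype.prod_sum_type]
    have h1 : ∏ e : G.E, σA (Sum.inl e) = ∏ e : G.E, σ e := rfl
    have h2 : ∏ j : {e // e ∈ J}, σA (Sum.inr j) = ∏ e ∈ J, σ e :=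
      (Finset.prod_subtype (p := fun e => e ∈ J) J (fun x => Iff.rfl) (fun e => σ e)).symm
    rw [h1, h2]
    have hJpos : ∏ e ∈ J, σ e = 1 := Finset.prod_eq_one (fun e he => hpos e (hJF he))
    have hGprod : ∏ e : G.E, σ e = 1 := by
      rw [← Finset.prod_filter_mul_prod_filter_not Finset.univ (fun e => σ e = -1) σ]
      have hneg : ∏ e ∈ Finset.univ.filter (fun e => σ e = -1), σ e =
          (-1 : ℤ) ^ (G.negEdges σ).card := by
        rw [show G.negEdges σ = Finset.univ.filter (fun e => σ e = -1) from rfl]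
        rw [Finset.prod_congr rfl (fun e he => (Finset.mem_filter.mp he).2)]
        simp
      have hposf : ∏ e ∈ Finset.univ.filter (fun e => ¬σ e = -1), σ e = 1 := by
        apply Finset.prod_eq_one
        intro e he
        rcases hσ e with h | h
        · exact h
        · exact absurd h (Finset.mem_filter.mp he).2
      rw [hneg, hposf, Even.neg_one_pow heven, mul_one]
    rw [hJpos, hGprod, mul_one]
  obtain ⟨c, hc1, hc2⟩ := A.euler_signing hconnA hevenA σA hσAsig hprodA
  -- define the orientation and flow
  set τ : G.E → Bool → ℤ := fun e b => c (Sum.inl e) b with hτ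
  set f : G.E → ℤ := fun e =>
    if h : e ∈ J then 1 + (c (Sum.inr ⟨e, h⟩) false) * (c (Sum.inl e) false) else 1 with hf
  have hcsq : ∀ (d : A.E) (b : Bool), c d b * c d b = 1 := by
    intro d b
    cases b with
    | false => rcases (hc1 d).1 with h | h <;> rw [h] <;> norm_num
    | true => rcases (hc1 d).2.1 with h | h <;> rw [h] <;> norm_num
  -- key pointwise identities
  have hkey : ∀ (e : G.E) (b : Bool), τ e b * f e =
      c (Sum.inl e) b + (if h : e ∈ J then c (Sum.inr ⟨e, h⟩) b else 0) := by
    intro e b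
    by_cases h : e ∈ J
    · simp only [hτ, hf, dif_pos h]
      have hinl := (hc1 (Sum.inl e)).2.2
      have hinr := (hc1 (Sum.inr ⟨e, h⟩)).2.2
      have hσe : σA (Sum.inl e) = σ e := rfl
      have hσe' : σA (Sum.inr (⟨e, h⟩ : {e // e ∈ J})) = σ e := rfl
      rw [hσe] at hinl
      rw [hσe'] at hinr
      cases b with
      | false =>
        have := hcsq (Sum.inl e) false
        ring_nf
        linear_combination (c (Sum.inr ⟨e, h⟩) false) * this
      | true =>
        -- c inl t * (1 + c inr f * c inl f) = c inl t + c inr t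
        have h1 := hcsq (Sum.inr (⟨e, h⟩ : {e // e ∈ J})) false
        -- c inl f * c inl t = -σ e = c inr f * c inr t
        have h2 : c (Sum.inl e) false * c (Sum.inl e) true =
            c (Sum.inr ⟨e, h⟩) false * c (Sum.inr ⟨e, h⟩) true := by
          rw [hinl, hinr]
        linear_combination (c (Sum.inr ⟨e, h⟩) false) * h2 +
          (c (Sum.inr ⟨e, h⟩) true) * h1
    · simp only [hτ, hf, dif_neg h]
      ring
  refine ⟨τ, f, ?_, ?_, ?_, ?_⟩
  · -- orientation
    intro e
    refine ⟨(hc1 (Sum.inl e)).1, (hc1 (Sum.inl e)).2.1, ?_⟩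
    have := (hc1 (Sum.inl e)).2.2
    simpa [hτ, hσA] using this
  · -- boundary
    intro v
    unfold Multigraph.boundary
    have hterm : ∀ e : G.E,
        ((if G.fst e = v then τ e false * f e else 0) +
          (if G.snd e = v then τ e true * f e else 0)) =
        (((if A.fst (Sum.inl e) = v then c (Sum.inl e) false else 0) +
          (if A.snd (Sum.inl e) = v then c (Sum.inl e) true else 0)) +
        (if h : e ∈ J then
          ((if A.fst (Sum.inr ⟨e, h⟩) = v then c (Sum.inr ⟨e, h⟩) false else 0) +
           (if A.snd (Sum.inr ⟨e, h⟩) = v then c (Sum.inr ⟨e, h⟩) true else 0)) else 0)) := by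
      intro e
      have hfstA : A.fst (Sum.inl e) = G.fst e := rfl
      have hsndA : A.snd (Sum.inl e) = G.snd e := rfl
      rw [hkey e false, hkey e true, hfstA, hsndA]
      by_cases h : e ∈ J
      · have hf2 : A.fst (Sum.inr (⟨e, h⟩ : {e // e ∈ J})) = G.fst e := rfl
        have hs2 : A.snd (Sum.inr (⟨e, h⟩ : {e // e ∈ J})) = G.snd e := rfl
        simp only [dif_pos h, hf2, hs2]
        by_cases h1 : G.fst e = v <;> by_cases h2 : G.snd e = v <;>
          simp [h1, h2] <;> ring
      · simp only [dif_neg h]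
        by_cases h1 : G.fst e = v <;> by_cases h2 : G.snd e = v <;>
          simp [h1, h2]
    rw [Finset.sum_congr rfl (fun e _ => hterm e)]
    rw [Finset.sum_add_distrib]
    have hsum2 : ∑ e : G.E, (if h : e ∈ J then
          ((if A.fst (Sum.inr ⟨e, h⟩) = v then c (Sum.inr ⟨e, h⟩) false else 0) +
           (if A.snd (Sum.inr ⟨e, h⟩) = v then c (Sum.inr ⟨e, h⟩) true else 0)) else 0) =
        ∑ j : {e // e ∈ J},
          ((if A.fst (Sum.inr j) = v then c (Sum.inr j) false else 0) +
           (if A.snd (Sum.inr j) = v then c (Sum.inr j) true else 0)) := by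
      rw [← Finset.sum_subset (Finset.subset_univ J)
        (fun e _ he => dif_neg he)]
      rw [Finset.univ_eq_attach, ← Finset.sum_attach J
        (fun e => if h : e ∈ J then
          ((if A.fst (Sum.inr ⟨e, h⟩) = v then c (Sum.inr ⟨e, h⟩) false else 0) +
           (if A.snd (Sum.inr ⟨e, h⟩) = v then c (Sum.inr ⟨e, h⟩) true else 0)) else 0)]
      apply Finset.sum_congr rfl
      intro x _
      rw [dif_pos x.2]
    rw [hsum2]
    have := hc2 v
    rw [Fintype.sum_sum_type] at this
    linarith [this]
  · -- bound on f
    intro e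
    simp only [hf]
    by_cases h : e ∈ J
    · rw [dif_pos h]
      rcases (hc1 (Sum.inr ⟨e, h⟩)).1 with h1 | h1 <;>
        rcases (hc1 (Sum.inl e)).1 with h2 | h2 <;>
        rw [h1, h2] <;> norm_num
    · rw [dif_neg h]
      norm_num
  · -- flow values outside F
    intro e heF
    have : e ∉ J := fun h => heF (hJF h)
    exact Or.inl (by simp [hf, this])
end
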